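/- If R_0 > 1, the relation j ≻ k defined by M_{jk} < 1 (for j ≠ k in Z/nZ) together with irreflexivity is a strict partial order on {0, ..., n-1}. -/

import Mathlib

/-! The product `M_{jk} M_{kl}` runs over `(k - j).val + (l - k).val` consecutive indices from `j`,
and this number is either `(l - j).val` or `(l - j).val + n`. In the second case the product wraps
once around the cycle, so `M_{jk} M_{kl} = R₀ M_{jl} ≥ M_{jl}`; in either case `M_{jl} ≤ M_{jk} M_{kl}`,
so `M_{jl} < 1`, and then `j ≠ l` because `M_{jj} = 1`. -/

/-- Follow-on factor `M_j = r_j f_j / (a_{j+1} + f_{j+1})`. -/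
noncomputable def Mfac {n : ℕ} (r f a : ZMod n → ℝ) (j : ZMod n) : ℝ :=
  r j * f j / (a (j + 1) + f (j + 1))

/-- Cyclic product `M_{jk} = ∏_{ℓ ∈ [j,k)} M_ℓ` (with `M_{jj} = 1`). -/
noncomputable def cycProd {n : ℕ} (M : ZMod n → ℝ) (j k : ZMod n) : ℝ :=
  ∏ i ∈ Finset.range ((k - j).val), M (j + (i : ZMod n))

open Finset

theorem ZMod.prod_range_add_natCast_eq_prod {α : Type*} [CommMonoid α] {n : ℕ} [NeZero n]
    (f : ZMod n → α) (j : ZMod n) :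
    ∏ i ∈ range n, f (j + i) = ∏ x, f x := by
  refine prod_nbij' (fun i : ℕ => j + i) (fun x => (x - j).val) (by simp) (by simp [ZMod.val_lt])
    (fun i hi => ?_) (fun x _ => by simp) (fun _ _ => rfl)
  simp [ZMod.val_natCast_of_lt (mem_range.1 hi)]

section cycProd

variable {n : ℕ} (M : ZMod n → ℝ)

theorem cycProd_self (j : ZMod n) : cycProd M j j = 1 := by
  simp [cycProd]

theorem cycProd_nonneg (hM : ∀ j, 0 ≤ M j) (j k : ZMod n) : 0 ≤ cycProd M j k :=
  prod_nonneg fun _ _ => hM _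

theorem cycProd_mul_cycProd [NeZero n] (j k l : ZMod n) :
    cycProd M j k * cycProd M k l =
      ∏ i ∈ range ((k - j).val + (l - k).val), M (j + i) := by
  simp [cycProd, prod_range_add, ← add_assoc]

theorem cycProd_mul_cycProd_eq_or [NeZero n] (j k l : ZMod n) :
    cycProd M j k * cycProd M k l = cycProd M j l ∨
      cycProd M j k * cycProd M k l = (∏ x, M x) * cycProd M j l := by
  have hsum : (k - j) + (l - k) = l - j := by abel
  rw [cycProd_mul_cycProd, cycProd, ← hsum]
  rcases lt_or_ge ((k - j).val + (l - k).val) n with h | h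
  · exact .inl (by rw [ZMod.val_add_of_lt h])
  · refine .inr ?_
    simp_rw [ZMod.val_add_val_of_le h, prod_range_add, Nat.cast_add, ← add_assoc,
      ZMod.prod_range_add_natCast_eq_prod, mul_comm]

theorem cycProd_le_mul_cycProd [NeZero n] (hM : ∀ j, 0 ≤ M j) (hR : 1 ≤ ∏ x, M x)
    (j k l : ZMod n) : cycProd M j l ≤ cycProd M j k * cycProd M k l := by
  rcases cycProd_mul_cycProd_eq_or M j k l with h | h <;> rw [h]
  exact le_mul_of_one_le_left (cycProd_nonneg M hM j l) hR

end cycProd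

/-- If R₀ > 1, the relation j ≻ k (j ≠ k and M_{jk} < 1) is a strict partial order. -/
theorem stmt9 (n : ℕ) [NeZero n] (M : ZMod n → ℝ) (hM : ∀ j, 0 < M j)
    (hR0 : 1 < ∏ j : ZMod n, M j) :
    IsStrictOrder (ZMod n) (fun j k => j ≠ k ∧ cycProd M j k < 1) := by
  have hM' : ∀ j, 0 ≤ M j := fun j => (hM j).le
  refine { irrefl := fun j h => h.1 rfl, trans := fun j k l ⟨_, hjk⟩ ⟨_, hkl⟩ => ?_ }
  have hjl : cycProd M j l < 1 :=
    (cycProd_le_mul_cycProd M hM' hR0.le j k l).trans_lt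
      (mul_lt_one_of_nonneg_of_lt_one_left (cycProd_nonneg M hM' j k) hjk hkl.le)
  exact ⟨fun hjl' => by simp [hjl', cycProd_self] at hjl, hjl⟩
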